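/- arXiv:2011.13163 — 2 statements merged into one kernel-verified Lean document; each statement's English description precedes it below -/
import Mathlib

section
/- Assume n ≥ 2, let (C_i) be a regular family of centralities, and let (θ_i) be thresholds with θ_i > 0 for every i. For each agent i let M_i = max{C_i(g+ij) : g a network, j ≠ i with ij ∉ g, and C_i(g) < θ_i} (this maximum exists since there are finitely many networks and C_i(∅) = 0 < θ_i for the empty network ∅). Assume that for every network g and every non-adjacent pair i, j: C_i(g) < θ_i if and only if C_i(g+ij) ≤ M_i. Then the truncated game with thresholds (θ_i) has at least one APSN; in fact every edge-maximal element of the set 𝒢 = {g : C_l(g) ≤ M_l for all l ∈ V} (which is nonempty, containing the empty network) is an APSN. -/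
open SimpleGraph

/-- Degree of vertex `i` in network `g`. -/
noncomputable def deg {V : Type*} (g : SimpleGraph V) (i : V) : ℕ :=
  Nat.card (g.neighborSet i)

/-- The network `g` with the (missing) edge `ij` added. -/
def addE {V : Type*} (g : SimpleGraph V) (i j : V) : SimpleGraph V :=
  g ⊔ SimpleGraph.fromEdgeSet {s(i, j)}

/-- The network `g` with the edge `ij` removed. -/
def delE {V : Type*} (g : SimpleGraph V) (i j : V) : SimpleGraph V :=
  g.deleteEdges {s(i, j)}

/-- Utility of agent `i` in the game with centralities `C` and edge cost `c`. -/
noncomputable def util {V : Type*} (C : V → SimpleGraph V → ℝ) (c : ℝ) (i : V)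
    (g : SimpleGraph V) : ℝ :=
  C i g - c * (deg g i)

/-- Adding the missing edge `ij` is an improving move. -/
def ImprovingAdd {V : Type*} (C : V → SimpleGraph V → ℝ) (c : ℝ) (g : SimpleGraph V)
    (i j : V) : Prop :=
  util C c i (addE g i j) ≥ util C c i g ∧ util C c j (addE g i j) ≥ util C c j g ∧
    (util C c i (addE g i j) > util C c i g ∨ util C c j (addE g i j) > util C c j g)

/-- Deleting the edge `ij` is an improving move. -/
def ImprovingDel {V : Type*} (C : V → SimpleGraph V → ℝ) (c : ℝ) (g : SimpleGraph V)
    (i j : V) : Prop :=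
  util C c i (delE g i j) > util C c i g ∨ util C c j (delE g i j) > util C c j g

/-- `g` is pairwise stable at edge cost `c`. -/
def PairwiseStable {V : Type*} (C : V → SimpleGraph V → ℝ) (c : ℝ) (g : SimpleGraph V) : Prop :=
  (∀ i j : V, i ≠ j → ¬ g.Adj i j → ¬ ImprovingAdd C c g i j) ∧
  (∀ i j : V, g.Adj i j → ¬ ImprovingDel C c g i j)

/-- `g` is asymptotically pairwise stable. -/
def APSN {V : Type*} (C : V → SimpleGraph V → ℝ) (g : SimpleGraph V) : Prop :=
  ∃ ε₀ : ℝ, 0 < ε₀ ∧ ∀ c : ℝ, 0 < c → c < ε₀ → PairwiseStable C c g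

/-- Axiom 1: the centrality of agent `i` is increasing. -/
def Axiom1 {V : Type*} (C : V → SimpleGraph V → ℝ) (i : V) : Prop :=
  ∀ (g : SimpleGraph V) (j : V), j ≠ i → ¬ g.Adj i j → C i (addE g i j) > C i g

/-- Axiom 1′: the centrality of agent `i` is decreasing. -/
def Axiom1' {V : Type*} (C : V → SimpleGraph V → ℝ) (i : V) : Prop :=
  ∀ (g : SimpleGraph V) (j : V), j ≠ i → ¬ g.Adj i j → C i (addE g i j) < C i g

/-- Axiom 2: the centrality of agent `i` is componentwise. -/
def Axiom2 {V : Type*} (C : V → SimpleGraph V → ℝ) (i : V) : Prop :=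
  ∀ (g : SimpleGraph V) (j : V), j ≠ i → ¬ g.Adj i j →
    ((g.Reachable i j → C i (addE g i j) > C i g) ∧
     (¬ g.Reachable i j → C i (addE g i j) ≤ C i g))

/-- Axiom 2′: the centrality of agent `i` is peripheral. -/
def Axiom2' {V : Type*} (C : V → SimpleGraph V → ℝ) (i : V) : Prop :=
  ∀ (g : SimpleGraph V) (j : V), j ≠ i → ¬ g.Adj i j →
    ((g.Reachable i j → C i (addE g i j) ≤ C i g) ∧
     (¬ g.Reachable i j → C i (addE g i j) > C i g))

/-- The centrality of agent `i` is degree homophilic with (strictly increasing) `f`. -/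
def DegreeHomophilic {V : Type*} (C : V → SimpleGraph V → ℝ) (i : V) (f : ℕ → ℤ) : Prop :=
  ∀ (g : SimpleGraph V) (j : V), j ≠ i → ¬ g.Adj i j →
    (C i (addE g i j) > C i g ↔ (deg g j : ℤ) ≤ f (deg g i))

/-- A family of centralities is regular: each is increasing, vanishes on isolated
vertices, and adding an edge cannot increase the centrality of an unrelated node. -/
def RegularFam {V : Type*} (C : V → SimpleGraph V → ℝ) : Prop :=
  (∀ i, Axiom1 C i) ∧
  (∀ (i : V) (g : SimpleGraph V), (∀ j, ¬ g.Adj i j) → C i g = 0) ∧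
  (∀ (g : SimpleGraph V) (i j k : V), i ≠ j → ¬ g.Adj i j → k ≠ i → k ≠ j →
    C k (addE g i j) ≤ C k g)

/-!
Every centrality of a regular family is nonnegative (remove the edges at `i` one at a time), so
`M l ≥ 0 = C l ⊥` and the empty network lies in `𝒢`; being finite, `𝒢` has edge-maximal elements.
Let `g` be one. A missing link `ij` cannot keep `g + ij` inside `𝒢`, and adding it only lowers
the centralities of third parties, so an endpoint `l` has `C l (g + ij) > M l`; by the key
hypothesis `l` is already saturated (`C l g ≥ θ l`), gains nothing and pays `c`. An existing link
`ij` satisfies `C i (g - ij) < θ i` since `(g - ij) + ij = g ∈ 𝒢`, so deleting it costs `i` a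
fixed positive amount of truncated centrality, which outweighs the saving `c` once `c` is small.
-/

section Graph

variable {V : Type*} (g : SimpleGraph V) (i j : V)

lemma addE_comm : addE g i j = addE g j i := by
  simp [addE, Sym2.eq_swap]

lemma delE_comm : delE g i j = delE g j i := by
  simp [delE, Sym2.eq_swap]

lemma le_addE : g ≤ addE g i j := le_sup_left

lemma addE_adj (h : i ≠ j) : (addE g i j).Adj i j := by
  simp [addE, h]

lemma not_adj_delE : ¬ (delE g i j).Adj i j := by
  simp [delE]

variable {g i j}

lemma addE_delE (h : g.Adj i j) : addE (delE g i j) i j = g := by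
  ext a b
  simp only [addE, delE, sup_adj, deleteEdges_adj, fromEdgeSet_adj, Set.mem_singleton_iff,
    Sym2.eq_iff]
  constructor
  · rintro (⟨hab, _⟩ | ⟨(⟨rfl, rfl⟩ | ⟨rfl, rfl⟩), _⟩)
    exacts [hab, h, h.symm]
  · intro hab
    by_cases hc : (a = i ∧ b = j) ∨ (a = j ∧ b = i)
    · exact Or.inr ⟨hc, hab.ne⟩
    · exact Or.inl ⟨hab, hc⟩

lemma delE_lt (h : g.Adj i j) : delE g i j < g :=
  lt_of_le_of_ne (deleteEdges_le _) fun he => not_adj_delE g i j (by rwa [he])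

lemma deg_addE [Fintype V] (hne : i ≠ j) (hadj : ¬ g.Adj i j) :
    deg (addE g i j) i = deg g i + 1 := by
  have hset : (addE g i j).neighborSet i = insert j (g.neighborSet i) := by
    ext k
    simp only [mem_neighborSet, addE, sup_adj, fromEdgeSet_adj, Set.mem_singleton_iff,
      Sym2.eq_iff, Set.mem_insert_iff]
    aesop
  rw [deg, deg, hset, Nat.card_coe_set_eq, Nat.card_coe_set_eq,
    Set.ncard_insert_of_notMem (show j ∉ g.neighborSet i from hadj)]

lemma deg_delE [Fintype V] (h : g.Adj i j) : deg g i = deg (delE g i j) i + 1 := by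
  conv_lhs => rw [← addE_delE h]
  exact deg_addE h.ne (not_adj_delE g i j)

end Graph

lemma exists_pos_forall_le {ι : Type*} [Finite ι] (f : ι → ℝ) (hf : ∀ i, 0 < f i) :
    ∃ ε > 0, ∀ i, ε ≤ f i := by
  cases isEmpty_or_nonempty ι
  · exact ⟨1, one_pos, isEmptyElim⟩
  · obtain ⟨i₀, hi₀⟩ := Finite.exists_min f
    exact ⟨f i₀, hf i₀, hi₀⟩

section Stability

variable {V : Type*} [Fintype V] {C : V → SimpleGraph V → ℝ} {c : ℝ} {g : SimpleGraph V} {i j : V}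

lemma util_addE_lt (hc : 0 < c) (hne : i ≠ j) (hadj : ¬ g.Adj i j)
    (hC : C i (addE g i j) ≤ C i g) : util C c i (addE g i j) < util C c i g := by
  simp only [util, deg_addE hne hadj]
  push_cast
  linarith

lemma util_delE_lt (h : g.Adj i j) (hc : c < C i g - C i (delE g i j)) :
    util C c i (delE g i j) < util C c i g := by
  simp only [util, deg_delE h]
  push_cast
  linarith

lemma apsn_of_forall_addE_of_forall_delE
    (hadd : ∀ i j, i ≠ j → ¬ g.Adj i j → C i (addE g i j) ≤ C i g ∨ C j (addE g i j) ≤ C j g)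
    (hdel : ∀ i j, g.Adj i j → C i (delE g i j) < C i g) :
    APSN C g := by
  obtain ⟨ε, hε, hεle⟩ := exists_pos_forall_le
    (fun e : {p : V × V // g.Adj p.1 p.2} => C e.1.1 g - C e.1.1 (delE g e.1.1 e.1.2))
    (fun e => sub_pos.mpr (hdel _ _ e.2))
  refine ⟨ε, hε, fun c hc hcε => ⟨fun i j hne hadj himp => ?_, fun i j h himp => ?_⟩⟩
  · rcases hadd i j hne hadj with hi | hj
    · exact (util_addE_lt hc hne hadj hi).not_ge himp.1
    · have hj_weak := himp.2.1
      rw [addE_comm] at hj hj_weak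
      exact (util_addE_lt hc hne.symm (fun h => hadj h.symm) hj).not_ge hj_weak
  · have hgap : ∀ a b, g.Adj a b → c < C a g - C a (delE g a b) :=
      fun a b hab => hcε.trans_le (hεle ⟨(a, b), hab⟩)
    rcases himp with hi | hj
    · exact (util_delE_lt h (hgap i j h)).not_gt hi
    · rw [delE_comm] at hj
      exact (util_delE_lt h.symm (hgap j i h.symm)).not_gt hj

end Stability

namespace RegularFam

variable {V : Type*} {C : V → SimpleGraph V → ℝ} (hreg : RegularFam C)
include hreg

lemma apply_delE_lt {g : SimpleGraph V} {i j : V} (h : g.Adj i j) : C i (delE g i j) < C i g := by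
  simpa only [addE_delE h] using hreg.1 i (delE g i j) j h.ne.symm (not_adj_delE g i j)

lemma nonneg [Finite V] (i : V) (g : SimpleGraph V) : 0 ≤ C i g := by
  induction g using WellFoundedLT.induction with
  | _ g ih =>
    by_cases hiso : ∀ j, ¬ g.Adj i j
    · exact (hreg.2.1 i g hiso).ge
    · obtain ⟨j, h⟩ := not_forall_not.mp hiso
      exact (ih _ (delE_lt h)).trans (hreg.apply_delE_lt h).le

lemma exists_lt_addE_of_maximal {M : V → ℝ} {g : SimpleGraph V} (hg : ∀ l, C l g ≤ M l)
    (hmax : ∀ g', g ≤ g' → (∀ l, C l g' ≤ M l) → g' = g) {i j : V} (hne : i ≠ j)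
    (hadj : ¬ g.Adj i j) : M i < C i (addE g i j) ∨ M j < C j (addE g i j) := by
  by_contra! hle
  have hstay : ∀ l, C l (addE g i j) ≤ M l := by
    intro l
    by_cases hli : l = i
    · exact hli ▸ hle.1
    by_cases hlj : l = j
    · exact hlj ▸ hle.2
    exact (hreg.2.2 g i j l hne hadj hli hlj).trans (hg l)
  exact hadj (hmax _ (le_addE g i j) hstay ▸ addE_adj g i j hne)

end RegularFam

section Truncated

variable {V : Type*} {C : V → SimpleGraph V → ℝ} {θ M : V → ℝ}
  (hkey : ∀ (g : SimpleGraph V) (i j : V), i ≠ j → ¬ g.Adj i j →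
    (C i g < θ i ↔ C i (addE g i j) ≤ M i))
include hkey

lemma min_addE_le_of_lt {g : SimpleGraph V} {i j : V} (hne : i ≠ j) (hadj : ¬ g.Adj i j)
    (hlt : M i < C i (addE g i j)) : min (C i (addE g i j)) (θ i) ≤ min (C i g) (θ i) := by
  have hsat : θ i ≤ C i g := not_lt.mp fun h => hlt.not_ge ((hkey g i j hne hadj).mp h)
  rw [min_eq_right hsat]
  exact min_le_right _ _

lemma min_delE_lt (hreg : RegularFam C) {g : SimpleGraph V} {i j : V} (hg : C i g ≤ M i)
    (h : g.Adj i j) : min (C i (delE g i j)) (θ i) < min (C i g) (θ i) := by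
  have hθ : C i (delE g i j) < θ i :=
    (hkey _ i j h.ne (not_adj_delE g i j)).mpr (by rwa [addE_delE h])
  rw [min_eq_left hθ.le]
  exact lt_min (hreg.apply_delE_lt h) hθ

end Truncated

theorem statement_16_general {V : Type*} [Fintype V]
    (C : V → SimpleGraph V → ℝ) (hreg : RegularFam C)
    (θ : V → ℝ) (M : V → ℝ)
    (hM : ∀ i, M i = sSup {x : ℝ | ∃ (g : SimpleGraph V) (j : V), j ≠ i ∧ ¬ g.Adj i j ∧
      C i g < θ i ∧ x = C i (addE g i j)})
    (hkey : ∀ (g : SimpleGraph V) (i j : V), i ≠ j → ¬ g.Adj i j →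
      (C i g < θ i ↔ C i (addE g i j) ≤ M i)) :
    -- 𝒢 = {g : ∀ l, C l g ≤ M l} has an edge-maximal element, and every
    -- edge-maximal element of 𝒢 is an APSN of the truncated game
    (∃ g : SimpleGraph V, (∀ l, C l g ≤ M l) ∧
      (∀ g' : SimpleGraph V, g ≤ g' → (∀ l, C l g' ≤ M l) → g' = g)) ∧
    (∀ g : SimpleGraph V, (∀ l, C l g ≤ M l) →
      (∀ g' : SimpleGraph V, g ≤ g' → (∀ l, C l g' ≤ M l) → g' = g) →
      APSN (fun i h => min (C i h) (θ i)) g) := by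
  have hM_nonneg : ∀ l, 0 ≤ M l := fun l =>
    (hM l).symm ▸ Real.sSup_nonneg (by rintro _ ⟨g, j, -, -, -, rfl⟩; exact hreg.nonneg l _)
  have hbot : ∀ l, C l ⊥ ≤ M l := fun l => (hreg.2.1 l ⊥ fun _ => id).trans_le (hM_nonneg l)
  refine ⟨?_, fun g hg hmax => apsn_of_forall_addE_of_forall_delE ?_ ?_⟩
  · obtain ⟨g, -, hgmax⟩ := (Set.toFinite {g : SimpleGraph V | ∀ l, C l g ≤ M l}).exists_le_maximal
      (show ⊥ ∈ {g : SimpleGraph V | ∀ l, C l g ≤ M l} from hbot)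
    exact ⟨g, hgmax.1, fun g' hle hg' => le_antisymm (hgmax.2 hg' hle) hle⟩
  · intro i j hne hadj
    refine (hreg.exists_lt_addE_of_maximal hg hmax hne hadj).imp
      (min_addE_le_of_lt hkey hne hadj) fun hj => ?_
    rw [addE_comm] at hj ⊢
    exact min_addE_le_of_lt hkey hne.symm (fun h => hadj h.symm) hj
  · exact fun i j h => min_delE_lt hkey hreg (hg i) h

theorem statement_16 {V : Type*} [Fintype V] (hn : 2 ≤ Fintype.card V)
    (C : V → SimpleGraph V → ℝ) (hreg : RegularFam C)
    (θ : V → ℝ) (hθ : ∀ i, 0 < θ i) (M : V → ℝ)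
    (hM : ∀ i, M i = sSup {x : ℝ | ∃ (g : SimpleGraph V) (j : V), j ≠ i ∧ ¬ g.Adj i j ∧
      C i g < θ i ∧ x = C i (addE g i j)})
    (hkey : ∀ (g : SimpleGraph V) (i j : V), i ≠ j → ¬ g.Adj i j →
      (C i g < θ i ↔ C i (addE g i j) ≤ M i)) :
    -- 𝒢 = {g : ∀ l, C l g ≤ M l} has an edge-maximal element, and every
    -- edge-maximal element of 𝒢 is an APSN of the truncated game
    (∃ g : SimpleGraph V, (∀ l, C l g ≤ M l) ∧
      (∀ g' : SimpleGraph V, g ≤ g' → (∀ l, C l g' ≤ M l) → g' = g)) ∧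
    (∀ g : SimpleGraph V, (∀ l, C l g ≤ M l) →
      (∀ g' : SimpleGraph V, g ≤ g' → (∀ l, C l g' ≤ M l) → g' = g) →
      APSN (fun i h => min (C i h) (θ i)) g) :=
  statement_16_general C hreg θ M hM hkey
end

section
/- Let (C_i) be arbitrary centralities and (θ_i) arbitrary thresholds, and let g be an APSN of the truncated game with thresholds (θ_i). If agent i satisfies θ_i ≤ C_i(g), then for every agent j adjacent to i in g one has C_i(g−ij) < θ_i; consequently the threshold of i is bracketed by a single edge flip: C_i(g−ij) < θ_i ≤ C_i(g) for every edge ij of g. -/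
open SimpleGraph

/-!
If `C_i(g − ij) ≥ θ_i` while `C_i(g) ≥ θ_i`, the truncated centrality of `i` stays at its cap
`θ_i` after dropping `ij`, whereas `i` saves the cost of one link; so at every positive cost the
deletion of `ij` is improving, which an asymptotically pairwise stable network excludes.
-/

theorem neighborSet_delE {V : Type*} (g : SimpleGraph V) (i j : V) :
    (delE g i j).neighborSet i = g.neighborSet i \ {j} := by
  ext k
  simp only [delE, mem_neighborSet, deleteEdges_adj, Set.mem_singleton_iff, Set.mem_sdiff,
    Sym2.eq_iff]
  constructor
  · rintro ⟨hik, hne⟩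
    exact ⟨hik, fun hkj => hne (Or.inl ⟨trivial, hkj⟩)⟩
  · rintro ⟨hik, hkj⟩
    refine ⟨hik, ?_⟩
    rintro (⟨-, rfl⟩ | ⟨-, rfl⟩)
    exacts [hkj rfl, hik.ne rfl]

theorem deg_delE_add_one {V : Type*} [Finite V] {g : SimpleGraph V} {i j : V}
    (hij : g.Adj i j) : deg (delE g i j) i + 1 = deg g i := by
  simp only [deg, Nat.card_coe_set_eq, neighborSet_delE]
  exact Set.ncard_sdiff_singleton_add_one hij

theorem util_truncated_lt_util_delE {V : Type*} [Finite V] {C : V → SimpleGraph V → ℝ}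
    {θ : V → ℝ} {c : ℝ} (hc : 0 < c) {g : SimpleGraph V} {i j : V} (hij : g.Adj i j)
    (hi : θ i ≤ C i g) (hdel : θ i ≤ C i (delE g i j)) :
    util (fun k h => min (C k h) (θ k)) c i g <
      util (fun k h => min (C k h) (θ k)) c i (delE g i j) := by
  have hdeg : (deg (delE g i j) i : ℝ) + 1 = deg g i := mod_cast deg_delE_add_one hij
  simp only [util, min_eq_right hi, min_eq_right hdel, ← hdeg]
  linarith

theorem PairwiseStable.util_delE_le {V : Type*} {C : V → SimpleGraph V → ℝ} {c : ℝ}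
    {g : SimpleGraph V} (hg : PairwiseStable C c g) {i j : V} (hij : g.Adj i j) :
    util C c i (delE g i j) ≤ util C c i g :=
  le_of_not_gt fun hlt => hg.2 i j hij (Or.inl hlt)

theorem APSN.exists_pairwiseStable {V : Type*} {C : V → SimpleGraph V → ℝ}
    {g : SimpleGraph V} (hg : APSN C g) : ∃ c, 0 < c ∧ PairwiseStable C c g := by
  obtain ⟨ε₀, hε₀, hstable⟩ := hg
  exact ⟨ε₀ / 2, half_pos hε₀, hstable _ (half_pos hε₀) (half_lt_self hε₀)⟩

theorem statement_18 {V : Type*} [Fintype V] (C : V → SimpleGraph V → ℝ) (θ : V → ℝ)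
    (g : SimpleGraph V) (h : APSN (fun i h => min (C i h) (θ i)) g)
    (i : V) (hi : θ i ≤ C i g) :
    ∀ j : V, g.Adj i j → C i (delE g i j) < θ i ∧ θ i ≤ C i g := by
  intro j hij
  obtain ⟨c, hc, hstable⟩ := h.exists_pairwiseStable
  refine ⟨lt_of_not_ge fun hdel => ?_, hi⟩
  exact (hstable.util_delE_le hij).not_gt (util_truncated_lt_util_delE hc hij hi hdel)
end
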